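/- arXiv:math/0602390 — 3 statements merged into one kernel-verified Lean document; each statement's English description precedes it below -/
import Mathlib

section
/- Let R : ℂ̂ → ℂ̂ be a rational map of degree at least 2. Suppose there is a constant C₀ > 0 such that for every exposed critical value v of R lying in the Julia set J(R) and every k ≥ 1, |(R^{k+1})'(v)| ≥ C₀. Then there are constants C₁ > 0 and θ ∈ (0,1) such that for every such critical value v, every k ≥ 1, and every ξ with R^k(ξ) ∈ Crit(R), one has dist(ξ, v) ≥ C₁ θ^k. -/
open Set Metric

/-!
Along the orbit of `v`, the chain rule gives `|(R^{k+1})'(v)| = |(R^k)'(v)| · |R'(R^k v)|`.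
The first factor is at most `M^k`, and the second is at most `C · dist(R^k v, R^k ξ)`
because `R^k ξ` is critical, hence at most `C M^k dist(v, ξ)`. So the hypothesis
`|(R^{k+1})'(v)| ≥ C₀` forces `dist(ξ, v) ≥ (C₀ / C) · (M^2)^{-k}`; replacing `M` by
`max M 2` makes the rate `θ = (M^2)⁻¹` lie in `(0, 1)`.
-/

section Cocycle

variable {X : Type*} {R : X → X} {d : ℕ → X → ℝ} {K : ℝ}

theorem cocycle_le_pow (hd0 : ∀ x, d 0 x = 1) (hd1 : ∀ x, 0 ≤ d 1 x)
    (hchain : ∀ (n : ℕ) (x : X), d (n + 1) x = d n x * d 1 (R^[n] x))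
    (hdK : ∀ x, d 1 x ≤ K) (n : ℕ) (x : X) : d n x ≤ K ^ n := by
  induction n with
  | zero => simp [hd0]
  | succ n ih =>
    rw [hchain, pow_succ]
    exact mul_le_mul ih (hdK _) (hd1 _) (pow_nonneg ((hd1 x).trans (hdK x)) n)

theorem cocycle_succ_le_mul_dist [MetricSpace X] {Crit : Set X} {C : ℝ}
    (hd0 : ∀ x, d 0 x = 1) (hd1 : ∀ x, 0 ≤ d 1 x)
    (hchain : ∀ (n : ℕ) (x : X), d (n + 1) x = d n x * d 1 (R^[n] x))
    (hdK : ∀ x, d 1 x ≤ K) (hLip : ∀ x y : X, dist (R x) (R y) ≤ K * dist x y)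
    (hC : 0 ≤ C) (hCd : ∀ w : X, d 1 w ≤ C * infDist w Crit)
    {k : ℕ} {v ξ : X} (hξ : R^[k] ξ ∈ Crit) :
    d (k + 1) v ≤ C * (K ^ 2) ^ k * dist ξ v := by
  have hK : 0 ≤ K := (hd1 v).trans (hdK v)
  have hLipIter : dist (R^[k] v) (R^[k] ξ) ≤ K ^ k * dist v ξ := by
    have := (LipschitzWith.of_dist_le' hLip).iterate k
    simpa [Real.coe_toNNReal _ hK] using this.dist_le_mul v ξ
  calc d (k + 1) v = d k v * d 1 (R^[k] v) := hchain k v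
    _ ≤ K ^ k * (C * dist (R^[k] v) (R^[k] ξ)) :=
        mul_le_mul (cocycle_le_pow hd0 hd1 hchain hdK k v)
          ((hCd _).trans (mul_le_mul_of_nonneg_left (infDist_le_dist_of_mem hξ) hC))
          (hd1 _) (pow_nonneg hK k)
    _ ≤ K ^ k * (C * (K ^ k * dist v ξ)) := by gcongr
    _ = C * (K ^ 2) ^ k * dist ξ v := by rw [dist_comm]; ring

end Cocycle

theorem stmt2_general {X : Type*} [MetricSpace X]
    (R : X → X) (Crit ECV : Set X)
    (d : ℕ → X → ℝ)
    (hd0 : ∀ x, d 0 x = 1)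
    (hd1 : ∀ x, 0 ≤ d 1 x)
    (hchain : ∀ (n : ℕ) (x : X), d (n + 1) x = d n x * d 1 (R^[n] x))
    (M : ℝ)
    (hLip : ∀ x y : X, dist (R x) (R y) ≤ M * dist x y)
    (hdM : ∀ x, d 1 x ≤ M)
    (C : ℝ) (hC : 0 < C)
    (hCd : ∀ w : X, d 1 w ≤ C * Metric.infDist w Crit)
    (C₀ : ℝ) (hC₀ : 0 < C₀)
    (hCE : ∀ v ∈ ECV, ∀ k : ℕ, 1 ≤ k → C₀ ≤ d (k + 1) v) :
    ∃ C₁ > 0, ∃ θ ∈ Set.Ioo (0 : ℝ) 1,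
      ∀ v ∈ ECV, ∀ k : ℕ, 1 ≤ k → ∀ ξ : X, R^[k] ξ ∈ Crit →
        C₁ * θ ^ k ≤ dist ξ v := by
  set L := max M 2
  have hL : 1 < L ^ 2 := by nlinarith [le_max_right M 2]
  refine ⟨C₀ / C, div_pos hC₀ hC, (L ^ 2)⁻¹,
    ⟨inv_pos.2 (by positivity), inv_lt_one_of_one_lt₀ hL⟩, ?_⟩
  intro v hv k hk ξ hξ
  have hbound : C₀ ≤ C * (L ^ 2) ^ k * dist ξ v :=
    (hCE v hv k hk).trans <| cocycle_succ_le_mul_dist hd0 hd1 hchain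
      (fun x => (hdM x).trans (le_max_left M 2))
      (fun x y => (hLip x y).trans (mul_le_mul_of_nonneg_right (le_max_left M 2) dist_nonneg))
      hC.le hCd hξ
  rw [inv_pow, ← div_eq_mul_inv, div_div, div_le_iff₀ (by positivity)]
  linarith

/-- If for some `C₀ > 0` every exposed critical value `v` in the Julia set satisfies
`|(R^{k+1})'(v)| ≥ C₀` for all `k ≥ 1`, then there are `C₁ > 0` and `θ ∈ (0,1)` so that
`dist(ξ, v) ≥ C₁ θ^k` whenever `R^k ξ ∈ Crit(R)`.  Here the rational map on the sphere
is abstracted as a map `R` of a metric space, `d n x` denotes `|(Rⁿ)'(x)|` (spherical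
derivative of the iterate, satisfying the chain rule), `M = sup |R'|` (so `R` is
`M`-Lipschitz), and `|R'(w)| ≤ C · dist(w, Crit(R))`. -/
theorem stmt2 {X : Type*} [MetricSpace X]
    (R : X → X) (Crit J ECV : Set X)
    (d : ℕ → X → ℝ)
    (hd0 : ∀ x, d 0 x = 1)
    (hd1 : ∀ x, 0 ≤ d 1 x)
    (hchain : ∀ (n : ℕ) (x : X), d (n + 1) x = d n x * d 1 (R^[n] x))
    (hECV : ∀ v ∈ ECV, v ∈ R '' Crit ∧ v ∈ J ∧ ∀ n : ℕ, R^[n] v ∉ Crit)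
    (M : ℝ) (hM : 0 < M)
    (hLip : ∀ x y : X, dist (R x) (R y) ≤ M * dist x y)
    (hdM : ∀ x, d 1 x ≤ M)
    (C : ℝ) (hC : 0 < C)
    (hCd : ∀ w : X, d 1 w ≤ C * Metric.infDist w Crit)
    (C₀ : ℝ) (hC₀ : 0 < C₀)
    (hCE : ∀ v ∈ ECV, ∀ k : ℕ, 1 ≤ k → C₀ ≤ d (k + 1) v) :
    ∃ C₁ > 0, ∃ θ ∈ Set.Ioo (0 : ℝ) 1,
      ∀ v ∈ ECV, ∀ k : ℕ, 1 ≤ k → ∀ ξ : X, R^[k] ξ ∈ Crit →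
        C₁ * θ ^ k ≤ dist ξ v :=
  stmt2_general R Crit ECV d hd0 hd1 hchain M hLip hdM C hC hCd C₀ hC₀ hCE
end

section
/- Let R be a rational map of degree at least 2 whose Julia set satisfies diam(J(R)) > (1/2)·diam(ℂ̂) in the spherical metric. Then there exists r_K ∈ (0, diam(ℂ̂)) such that for every r ∈ (0, r_K), every z₀ ∈ ℂ̂, and every connected component W of R⁻¹(B(z₀, r)), one has diam(ℂ̂ \ W) > (1/2)·diam(ℂ̂). -/
/-!
Pick periodic points `p`, `q` at chordal distance `> 1`. They lie in the range of `R`, so `R` is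
not constant, and by the identity theorem it takes two values `R u ≠ R v` on the closed unit disc.
Now let `W ⊆ R⁻¹(B(z₀, r))` have complement of spherical diameter `≤ 1`. Then `p` or `q` lies in
`W`, so the small ball `B(z₀, r)` contains `R p` or `R q` and is trapped in a bounded disc that
depends only on `p` and `q`. If `Wᶜ` meets the unit disc, it stays away from `∞`, so `R` is bounded
off a compact set and Liouville makes it constant. Otherwise the unit disc lies in `W`, so `R u` and
`R v` both lie in `B(z₀, r)`, which is impossible once `2r < d(R u, R v)`.
-/

open Set Metric

noncomputable section

/-- The chordal (spherical) distance on `ℂ ⊆ ℂ̂`. -/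
def chordal (z w : ℂ) : ℝ :=
  2 * ‖z - w‖ /
    (Real.sqrt (1 + ‖z‖ ^ 2) * Real.sqrt (1 + ‖w‖ ^ 2))

/-- Spherical ball. -/
def cball (z : ℂ) (r : ℝ) : Set ℂ := {w : ℂ | chordal z w < r}

/-- Spherical diameter of a set. -/
def chordalDiam (S : Set ℂ) : ℝ := sSup (Set.image2 chordal S S)

lemma chordal_nonneg (z w : ℂ) : 0 ≤ chordal z w := by unfold chordal; positivity

lemma chordal_comm (z w : ℂ) : chordal z w = chordal w z := by
  unfold chordal; rw [norm_sub_rev]; ring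

lemma chordal_self (z : ℂ) : chordal z z = 0 := by simp [chordal]

lemma chordal_pos {z w : ℂ} (h : z ≠ w) : 0 < chordal z w := by
  unfold chordal
  have := norm_pos_iff.mpr (sub_ne_zero.mpr h)
  positivity

lemma chordal_eq_sqrt (z w : ℂ) :
    chordal z w = √(4 * ‖z - w‖ ^ 2 / ((1 + ‖z‖ ^ 2) * (1 + ‖w‖ ^ 2))) := by
  rw [Real.sqrt_div' _ (by positivity), Real.sqrt_mul (by positivity),
    Real.sqrt_mul' _ (by positivity), Real.sqrt_sq (norm_nonneg _),
    show √4 = 2 by rw [show (4 : ℝ) = 2 ^ 2 by norm_num]; simp]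
  rfl

lemma lt_chordal_iff {z w : ℂ} {t : ℝ} (ht : 0 ≤ t) :
    t < chordal z w ↔ t ^ 2 * ((1 + ‖z‖ ^ 2) * (1 + ‖w‖ ^ 2)) < 4 * ‖z - w‖ ^ 2 := by
  rw [chordal_eq_sqrt, Real.lt_sqrt ht, lt_div_iff₀ (by positivity)]

def inverseStereographic (z : ℂ) : EuclideanSpace ℝ (Fin 3) :=
  WithLp.toLp 2 ![2 * z.re / (1 + ‖z‖ ^ 2), 2 * z.im / (1 + ‖z‖ ^ 2), (‖z‖ ^ 2 - 1) / (1 + ‖z‖ ^ 2)]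

lemma chordal_eq_dist_inverseStereographic (z w : ℂ) :
    chordal z w = dist (inverseStereographic z) (inverseStereographic w) := by
  rw [chordal_eq_sqrt, EuclideanSpace.dist_eq, Fin.sum_univ_three]
  congr 1
  have hz : ‖z‖ ^ 2 = z.re ^ 2 + z.im ^ 2 := by rw [Complex.sq_norm, Complex.normSq_apply]; ring
  have hw : ‖w‖ ^ 2 = w.re ^ 2 + w.im ^ 2 := by rw [Complex.sq_norm, Complex.normSq_apply]; ring
  have hzw : ‖z - w‖ ^ 2 = (z.re - w.re) ^ 2 + (z.im - w.im) ^ 2 := by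
    rw [Complex.sq_norm, Complex.normSq_apply]; simp only [Complex.sub_re, Complex.sub_im]; ring
  have hz' : 0 < 1 + (z.re ^ 2 + z.im ^ 2) := by positivity
  have hw' : 0 < 1 + (w.re ^ 2 + w.im ^ 2) := by positivity
  simp only [inverseStereographic, hz, hw, hzw, Real.dist_eq, sq_abs, Matrix.cons_val_zero,
    Matrix.cons_val_one, Matrix.cons_val_two, Matrix.head_cons, Matrix.tail_cons]
  field_simp
  ring

lemma chordal_triangle (a b c : ℂ) : chordal a c ≤ chordal a b + chordal b c := by
  simpa only [chordal_eq_dist_inverseStereographic] using dist_triangle _ _ _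

lemma chordal_le_two (z w : ℂ) : chordal z w ≤ 2 := by
  rw [← not_lt, lt_chordal_iff zero_le_two]
  have : ‖z - w‖ ≤ ‖z‖ + ‖w‖ := norm_sub_le z w
  nlinarith [norm_nonneg (z - w), sq_nonneg (‖z‖ * ‖w‖ - 1)]

lemma chordal_le_two_mul_dist (z w : ℂ) : chordal z w ≤ 2 * dist z w := by
  rw [Complex.dist_eq, chordal, div_le_iff₀ (by positivity)]
  have := one_le_mul_of_one_le_of_one_le
    (Real.one_le_sqrt.mpr (le_add_of_nonneg_right (sq_nonneg ‖z‖)))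
    (Real.one_le_sqrt.mpr (le_add_of_nonneg_right (sq_nonneg ‖w‖)))
  nlinarith [norm_nonneg (z - w)]

lemma chordal_lt_of_mem_cball {z₀ a b : ℂ} {r : ℝ} (ha : a ∈ cball z₀ r) (hb : b ∈ cball z₀ r) :
    chordal a b < 2 * r := by
  have := chordal_triangle a z₀ b
  rw [chordal_comm a z₀] at this
  linarith [show chordal z₀ a < r from ha, show chordal z₀ b < r from hb]

lemma one_lt_chordal_of_norm_le_one_of_four_le_norm {z w : ℂ} (hz : ‖z‖ ≤ 1) (hw : 4 ≤ ‖w‖) :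
    1 < chordal z w := by
  rw [lt_chordal_iff zero_le_one]
  have h : ‖w‖ - 1 ≤ ‖z - w‖ := by
    have := norm_sub_norm_le w z; rw [norm_sub_rev] at this; linarith
  have hz2 : ‖z‖ ^ 2 ≤ 1 := by nlinarith [norm_nonneg z]
  nlinarith [mul_nonneg (norm_nonneg w) (sub_nonneg.mpr hw)]

lemma inv_one_add_lt_chordal {z w : ℂ} {C : ℝ} (hz : ‖z‖ ≤ C) (hw : 2 * C + 1 ≤ ‖w‖) :
    (1 + C)⁻¹ < chordal z w := by
  have hC : 0 ≤ C := (norm_nonneg z).trans hz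
  rw [lt_chordal_iff (by positivity), inv_pow, inv_mul_lt_iff₀ (by positivity)]
  have h : 1 + ‖w‖ ≤ 2 * ‖z - w‖ := by
    have := norm_sub_norm_le w z; rw [norm_sub_rev] at this; linarith
  have hz2 : 1 + ‖z‖ ^ 2 ≤ (1 + C) ^ 2 := by nlinarith [norm_nonneg z]
  have hw2 : 1 + ‖w‖ ^ 2 < (1 + ‖w‖) ^ 2 := by nlinarith
  calc (1 + ‖z‖ ^ 2) * (1 + ‖w‖ ^ 2) < (1 + C) ^ 2 * (1 + ‖w‖) ^ 2 := by
        apply mul_lt_mul' hz2 hw2 (by positivity) (by positivity)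
    _ ≤ (1 + C) ^ 2 * (4 * ‖z - w‖ ^ 2) := by gcongr; nlinarith

lemma bddAbove_image2_chordal (S T : Set ℂ) : BddAbove (image2 chordal S T) :=
  ⟨2, by rintro _ ⟨a, -, b, -, rfl⟩; exact chordal_le_two a b⟩

lemma chordal_le_chordalDiam {S : Set ℂ} {z w : ℂ} (hz : z ∈ S) (hw : w ∈ S) :
    chordal z w ≤ chordalDiam S :=
  le_csSup (bddAbove_image2_chordal S S) (mem_image2_of_mem hz hw)

lemma chordalDiam_univ : chordalDiam univ = 2 := by
  refine le_antisymm (csSup_le (image2_nonempty_iff.mpr ⟨univ_nonempty, univ_nonempty⟩) ?_) ?_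
  · rintro _ ⟨a, -, b, -, rfl⟩
    exact chordal_le_two a b
  · have h : chordal 1 (-1) = 2 := by norm_num [chordal, one_add_one_eq_two]
    exact h ▸ chordal_le_chordalDiam (mem_univ _) (mem_univ _)

lemma exists_lt_chordal_of_lt_chordalDiam {S : Set ℂ} {t : ℝ} (ht : 0 ≤ t)
    (h : t < chordalDiam S) : ∃ a ∈ S, ∃ b ∈ S, t < chordal a b := by
  have hne : (image2 chordal S S).Nonempty := by
    by_contra hS
    rw [not_nonempty_iff_eq_empty] at hS
    rw [chordalDiam, hS, Real.sSup_empty] at h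
    linarith
  obtain ⟨_, ⟨a, ha, b, hb, rfl⟩, hab⟩ := exists_lt_of_lt_csSup hne h
  exact ⟨a, ha, b, hb, hab⟩

lemma exists_chordal_lt_of_mem_closure {S : Set ℂ} {x : ℂ} (hx : x ∈ closure S) {ε : ℝ}
    (hε : 0 < ε) : ∃ p ∈ S, chordal x p < ε := by
  obtain ⟨p, hp, hxp⟩ := Metric.mem_closure_iff.mp hx (ε / 2) (half_pos hε)
  exact ⟨p, hp, (chordal_le_two_mul_dist x p).trans_lt (by linarith)⟩

lemma cball_subset_ball_of_mem {z₀ a : ℂ} {r C : ℝ} (ha : ‖a‖ ≤ C) (hr : r ≤ (2 * (1 + C))⁻¹)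
    (haz : a ∈ cball z₀ r) : cball z₀ r ⊆ ball 0 (2 * C + 1) := by
  intro w hw
  rw [mem_ball_zero_iff]
  by_contra! hw'
  have h_far := inv_one_add_lt_chordal ha hw'
  have h_near := chordal_lt_of_mem_cball haz hw
  rw [mul_inv] at hr
  linarith

lemma Function.mem_range_of_iterate_eq_self {α : Type*} {f : α → α} {p : α} {n : ℕ} (hn : 1 ≤ n)
    (hp : f^[n] p = p) : p ∈ range f := by
  obtain ⟨k, rfl⟩ := Nat.exists_eq_add_of_le' hn
  exact ⟨f^[k] p, by rw [← Function.iterate_succ_apply' f k p, hp]⟩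

lemma Differentiable.exists_ne_on_ball {F : Type*} [NormedAddCommGroup F] [NormedSpace ℂ F]
    [CompleteSpace F] {f : ℂ → F} (hf : Differentiable ℂ f) {x y : ℂ} (hxy : f x ≠ f y) (z : ℂ)
    {ε : ℝ} (hε : 0 < ε) : ∃ u ∈ ball z ε, ∃ v ∈ ball z ε, f u ≠ f v := by
  by_contra! h
  have hloc : f =ᶠ[nhds z] fun _ ↦ f z :=
    Filter.eventually_of_mem (ball_mem_nhds z hε) fun u hu ↦ h u hu z (mem_ball_self hε)
  have hconst := AnalyticOnNhd.eq_of_eventuallyEq (fun w _ ↦ hf.analyticAt w)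
    analyticOnNhd_const hloc
  exact hxy (by rw [hconst])

lemma Differentiable.apply_eq_apply_of_isBounded_image_compl {E F : Type*}
    [NormedAddCommGroup E] [NormedSpace ℂ E] [NormedAddCommGroup F] [NormedSpace ℂ F]
    {f : E → F} (hf : Differentiable ℂ f) {K : Set E} (hK : IsCompact K)
    (hb : Bornology.IsBounded (f '' Kᶜ)) (z w : E) : f z = f w := by
  refine hf.apply_eq_apply_of_bounded ?_ z w
  rw [← image_univ, ← union_compl_self K, image_union]
  exact (hK.image hf.continuous).isBounded.union hb

theorem one_lt_chordalDiam_compl_of_subset_preimage {R : ℂ → ℂ} (hR : Differentiable ℂ R)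
    {u v p q z₀ : ℂ} {r : ℝ} (hu : ‖u‖ ≤ 1) (hv : ‖v‖ ≤ 1) (hr_uv : 2 * r < chordal (R u) (R v))
    (hpq : 1 < chordal p q) (hr_pq : r ≤ (2 * (1 + max ‖R p‖ ‖R q‖))⁻¹)
    {W : Set ℂ} (hW : W ⊆ R ⁻¹' cball z₀ r) : 1 < chordalDiam Wᶜ := by
  by_contra! h
  have hWc : ∀ y ∈ Wᶜ, ∀ w ∈ Wᶜ, chordal y w ≤ 1 :=
    fun y hy w hw ↦ (chordal_le_chordalDiam hy hw).trans h
  obtain ⟨e, heW, heC⟩ : ∃ e ∈ W, ‖R e‖ ≤ max ‖R p‖ ‖R q‖ := by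
    by_cases hp : p ∈ W
    · exact ⟨p, hp, le_max_left _ _⟩
    by_cases hq : q ∈ W
    · exact ⟨q, hq, le_max_right _ _⟩
    exact absurd (hWc p hp q hq) hpq.not_ge
  have hball := cball_subset_ball_of_mem heC hr_pq (hW heW)
  by_cases hdisk : closedBall 0 1 ⊆ W
  · have := chordal_lt_of_mem_cball (hW (hdisk (mem_closedBall_zero_iff.mpr hu)))
      (hW (hdisk (mem_closedBall_zero_iff.mpr hv)))
    linarith
  obtain ⟨z₁, hz₁, hz₁W⟩ := not_subset.mp hdisk
  have hfar : (closedBall 0 4)ᶜ ⊆ W := fun w hw ↦ by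
    by_contra hwW
    have hw4 : 4 < ‖w‖ := by simpa using hw
    have := one_lt_chordal_of_norm_le_one_of_four_le_norm (mem_closedBall_zero_iff.mp hz₁) hw4.le
    linarith [hWc z₁ hz₁W w hwW]
  have hRuv := hR.apply_eq_apply_of_isBounded_image_compl (isCompact_closedBall 0 4)
    (isBounded_ball.subset ((image_subset_iff.mpr (hfar.trans hW)).trans hball)) u v
  have hr : 0 < r := (chordal_nonneg _ _).trans_lt (hW heW)
  rw [hRuv, chordal_self] at hr_uv
  linarith

theorem exists_radius_one_lt_chordalDiam_compl {R : ℂ → ℂ} (hR : Differentiable ℂ R)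
    {u v p q : ℂ} (hu : ‖u‖ ≤ 1) (hv : ‖v‖ ≤ 1) (huv : R u ≠ R v) (hpq : 1 < chordal p q) :
    ∃ rK ∈ Ioo (0 : ℝ) 2, ∀ r ∈ Ioo 0 rK, ∀ z₀ : ℂ, ∀ W ⊆ R ⁻¹' cball z₀ r,
      1 < chordalDiam Wᶜ := by
  have hδ := chordal_pos huv
  refine ⟨min (min (chordal (R u) (R v) / 2) (2 * (1 + max ‖R p‖ ‖R q‖))⁻¹) 1,
    ⟨by positivity, (min_le_right _ _).trans_lt one_lt_two⟩, fun r hr z₀ W hW ↦ ?_⟩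
  simp only [mem_Ioo, lt_min_iff] at hr
  exact one_lt_chordalDiam_compl_of_subset_preimage hR hu hv (by linarith) hpq hr.2.1.2.le hW

/-- Lemma: if `diam J(R) > (1/2) diam ℂ̂`, there is `r_K > 0` such that every pull-back
`W` of a spherical ball of radius `r < r_K` by `R` satisfies
`diam(ℂ̂ \ W) > (1/2) diam ℂ̂`.  The rational map of degree ≥ 2 is encoded by a
holomorphic map `R` together with its Julia set `J`, in which periodic points are
dense. -/
theorem stmt6 (R : ℂ → ℂ) (hR : Differentiable ℂ R)
    (J : Set ℂ)
    (hdense : J ⊆ closure {z : ℂ | ∃ n : ℕ, 1 ≤ n ∧ R^[n] z = z})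
    (hJdiam : (1 / 2) * chordalDiam Set.univ < chordalDiam J) :
    ∃ rK ∈ Set.Ioo (0 : ℝ) (chordalDiam Set.univ),
      ∀ r ∈ Set.Ioo (0 : ℝ) rK, ∀ z₀ : ℂ, ∀ x ∈ R ⁻¹' cball z₀ r,
        (1 / 2) * chordalDiam Set.univ <
          chordalDiam (connectedComponentIn (R ⁻¹' cball z₀ r) x)ᶜ := by
  rw [chordalDiam_univ, one_div_mul_cancel two_ne_zero] at hJdiam ⊢
  obtain ⟨a, ha, b, hb, hab⟩ := exists_lt_chordal_of_lt_chordalDiam zero_le_one hJdiam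
  have hε : 0 < (chordal a b - 1) / 3 := by linarith
  obtain ⟨p, ⟨n, hn, hp⟩, hap⟩ := exists_chordal_lt_of_mem_closure (hdense ha) hε
  obtain ⟨q, ⟨m, hm, hq⟩, hbq⟩ := exists_chordal_lt_of_mem_closure (hdense hb) hε
  have hpq : 1 < chordal p q := by
    linarith [chordal_triangle a p b, chordal_triangle p q b, chordal_comm a p, chordal_comm q b]
  obtain ⟨x, rfl⟩ := Function.mem_range_of_iterate_eq_self hn hp
  obtain ⟨y, rfl⟩ := Function.mem_range_of_iterate_eq_self hm hq
  have hxy : R x ≠ R y := fun h ↦ by rw [h, chordal_self] at hpq; linarith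
  obtain ⟨u, hu, v, hv, huv⟩ := hR.exists_ne_on_ball hxy 0 one_pos
  obtain ⟨rK, hrK, hW⟩ := exists_radius_one_lt_chordalDiam_compl hR
    (mem_ball_zero_iff.mp hu).le (mem_ball_zero_iff.mp hv).le huv hpq
  exact ⟨rK, hrK, fun r hr z₀ _ _ ↦ hW r hr z₀ _ (connectedComponentIn_subset _ _)⟩
end
end

section
/- Let R be a rational map of degree at least 2, D > 1, (V̂, V) a nice couple for R, and let X ⊆ ℂ̂ have positive Lebesgue measure such that every connected component Ŵ of ℂ̂ \ R⁻¹(K(V̂)) meeting X satisfies Ŵ ⊆ X and R^{m_Ŵ} is univalent on Ŵ with distortion bounded by D. Define ξ(X, V) = |X \ R⁻¹(K(V))| / |X| and Ξ̃(V̂, V) = min{ D²·max_c |V̂^c \ K(V)|/|V̂^c| , 1 - D⁻²·(1 - max_c |V̂^c \ K(V)|/|V̂^c|) }. Then ξ(X, V) ≤ ξ(X, V̂) · Ξ̃(V̂, V). -/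
/-! On a component `Ŵ` of `ℂ \ R⁻¹(K(V̂))`, the iterate `R^[m]` maps `Ŵ` univalently onto some
`V̂^c`, and by the Markov property it carries `Ŵ \ R⁻¹(K(V))` into `V̂^c \ K(V)`. Spherical
area transforms under a holomorphic injection with the square of the spherical derivative as
Jacobian, so distortion `D` changes relative areas by a factor at most `D²`. Comparing the
densities of `V̂^c \ K(V)` and of its complement in `V̂^c` with those of their pull-backs in `Ŵ`
bounds the density of `Ŵ \ R⁻¹(K(V))` in `Ŵ` by `Ξ̃`; summing over the countably many
components that make up `X \ R⁻¹(K(V̂))` gives the theorem. -/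

open Set Metric MeasureTheory

noncomputable section

/-- Spherical area of a subset of `ℂ ⊆ ℂ̂`. -/
def sphArea (E : Set ℂ) : ℝ := ∫ z in E, 4 / (1 + ‖z‖ ^ 2) ^ 2

/-- Spherical derivative of `f` at `z`. -/
def sphDeriv (f : ℂ → ℂ) (z : ℂ) : ℝ :=
  ‖deriv f z‖ * (1 + ‖z‖ ^ 2) / (1 + ‖f z‖ ^ 2)

/-- `K(S) = {z : Rʲ z ∉ S for all j ≥ 0}`. -/
def Ktower (R : ℂ → ℂ) (S : Set ℂ) : Set ℂ := {z : ℂ | ∀ j : ℕ, R^[j] z ∉ S}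

def sphericalDensity (z : ℂ) : ℝ := 4 / (1 + ‖z‖ ^ 2) ^ 2

lemma sphericalDensity_pos (z : ℂ) : 0 < sphericalDensity z := by
  unfold sphericalDensity; positivity

@[fun_prop]
lemma continuous_sphericalDensity : Continuous sphericalDensity :=
  continuous_const.div (by fun_prop) fun z => by positivity

lemma integrable_sphericalDensity : Integrable sphericalDensity (volume : Measure ℂ) := by
  have h4 : (Module.finrank ℝ ℂ : ℝ) < 4 := by rw [Complex.finrank_real_complex]; norm_num
  refine ((integrable_one_add_norm (E := ℂ) h4).const_mul 16).mono'
    continuous_sphericalDensity.aestronglyMeasurable (.of_forall fun z => ?_)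
  have hpow : ((1 : ℝ) + ‖z‖) ^ (-(4 : ℝ)) = ((1 + ‖z‖) ^ 4)⁻¹ := by
    rw [Real.rpow_neg (by positivity)]; norm_cast
  rw [Real.norm_of_nonneg (sphericalDensity_pos z).le, sphericalDensity, hpow, ← div_eq_mul_inv,
    div_le_div_iff₀ (by positivity) (by positivity)]
  nlinarith [norm_nonneg z, sq_nonneg (1 - ‖z‖), sq_nonneg (1 - ‖z‖ ^ 2), sq_nonneg (‖z‖ - ‖z‖ ^ 2)]

def sphMeasure : Measure ℂ := volume.withDensity fun z => ENNReal.ofReal (sphericalDensity z)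

instance : IsFiniteMeasure sphMeasure :=
  isFiniteMeasure_withDensity_ofReal integrable_sphericalDensity.2

instance : sphMeasure.IsOpenPosMeasure := by
  refine Measure.AbsolutelyContinuous.isOpenPosMeasure (μ := volume) fun s hs => ?_
  have hpos : {z : ℂ | ENNReal.ofReal (sphericalDensity z) ≠ 0} = univ :=
    eq_univ_of_forall fun z => by simpa using sphericalDensity_pos z
  rwa [sphMeasure, withDensity_apply_eq_zero (by fun_prop), hpos, univ_inter] at hs

lemma sphArea_eq_measureReal (E : Set ℂ) : sphArea E = sphMeasure.real E := by
  change ∫ z in E, sphericalDensity z = _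
  rw [measureReal_def, sphMeasure, withDensity_apply',
    integral_eq_lintegral_of_nonneg_ae (.of_forall fun z => (sphericalDensity_pos z).le)
      continuous_sphericalDensity.aestronglyMeasurable.restrict]

lemma sphDeriv_nonneg (f : ℂ → ℂ) (z : ℂ) : 0 ≤ sphDeriv f z := by
  unfold sphDeriv; positivity

lemma sphDeriv_sq_mul_sphericalDensity (f : ℂ → ℂ) (z : ℂ) :
    sphDeriv f z ^ 2 * sphericalDensity z = ‖deriv f z‖ ^ 2 * sphericalDensity (f z) := by
  unfold sphDeriv sphericalDensity
  field_simp

lemma measurable_sphDeriv {f : ℂ → ℂ} (hf : Continuous f) : Measurable (sphDeriv f) := by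
  unfold sphDeriv
  have := measurable_deriv f
  fun_prop

lemma det_restrictScalars_toSpanSingleton (a : ℂ) :
    ((ContinuousLinearMap.toSpanSingleton ℂ a).restrictScalars ℝ).det = ‖a‖ ^ 2 := by
  rw [ContinuousLinearMap.det, ContinuousLinearMap.coe_restrictScalars,
    LinearMap.det_restrictScalars]
  simp [Algebra.norm_complex_apply, Complex.sq_norm]

lemma sphMeasure_image {f : ℂ → ℂ} (hf : Differentiable ℂ f) {A : Set ℂ} (hA : MeasurableSet A)
    (hinj : InjOn f A) :
    sphMeasure (f '' A) = ∫⁻ z in A, ENNReal.ofReal (sphDeriv f z ^ 2) ∂sphMeasure := by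
  have hderiv (z : ℂ) (_ : z ∈ A) : HasFDerivWithinAt f
      ((ContinuousLinearMap.toSpanSingleton ℂ (deriv f z)).restrictScalars ℝ) A z :=
    ((hf z).hasDerivAt.hasFDerivAt.restrictScalars ℝ).hasFDerivWithinAt
  rw [sphMeasure, withDensity_apply', lintegral_image_eq_lintegral_abs_det_fderiv_mul volume hA
    hderiv hinj, setLIntegral_withDensity_eq_setLIntegral_mul _ (by fun_prop)
    ((measurable_sphDeriv hf.continuous).pow_const 2).ennreal_ofReal hA]
  refine setLIntegral_congr_fun hA fun z _ => ?_
  rw [det_restrictScalars_toSpanSingleton, Pi.mul_apply, ← ENNReal.ofReal_mul (by positivity),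
    ← ENNReal.ofReal_mul (sphericalDensity_pos z).le, abs_of_nonneg (by positivity),
    mul_comm (sphericalDensity z), sphDeriv_sq_mul_sphericalDensity]

section Distortion

variable {f : ℂ → ℂ} {A W : Set ℂ}

lemma le_sphMeasureReal_image (hf : Differentiable ℂ f) (hA : MeasurableSet A) (hinj : InjOn f A)
    {a : ℝ} (ha : 0 ≤ a) (h : ∀ z ∈ A, a ≤ sphDeriv f z) :
    a ^ 2 * sphMeasure.real A ≤ sphMeasure.real (f '' A) := by
  have key : ENNReal.ofReal (a ^ 2) * sphMeasure A ≤ sphMeasure (f '' A) := by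
    rw [sphMeasure_image hf hA hinj, ← setLIntegral_const]
    exact setLIntegral_mono' hA fun z hz =>
      ENNReal.ofReal_le_ofReal (pow_le_pow_left₀ ha (h z hz) 2)
  simpa [measureReal_def, ENNReal.toReal_mul, ha] using ENNReal.toReal_mono (measure_ne_top _ _) key

lemma sphMeasureReal_image_le (hf : Differentiable ℂ f) (hA : MeasurableSet A) (hinj : InjOn f A)
    {b : ℝ} (h : ∀ z ∈ A, sphDeriv f z ≤ b) :
    sphMeasure.real (f '' A) ≤ b ^ 2 * sphMeasure.real A := by
  have key : sphMeasure (f '' A) ≤ ENNReal.ofReal (b ^ 2) * sphMeasure A := by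
    rw [sphMeasure_image hf hA hinj, ← setLIntegral_const]
    exact setLIntegral_mono' hA fun z hz =>
      ENNReal.ofReal_le_ofReal (pow_le_pow_left₀ (sphDeriv_nonneg f z) (h z hz) 2)
  simpa [measureReal_def, ENNReal.toReal_mul, sq_nonneg] using
    ENNReal.toReal_mono (by finiteness) key

lemma density_le_sq_mul_density_image (hf : Differentiable ℂ f) (hW : MeasurableSet W)
    (hinj : InjOn f W) (hfW : 0 < sphMeasure.real (f '' W)) {D : ℝ} (hD : 0 < D)
    (hdist : ∀ z ∈ W, ∀ w ∈ W, sphDeriv f z ≤ D * sphDeriv f w)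
    (hA : MeasurableSet A) (hAW : A ⊆ W) :
    sphMeasure.real A / sphMeasure.real W ≤
        D ^ 2 * (sphMeasure.real (f '' A) / sphMeasure.real (f '' W)) ∧
      sphMeasure.real (f '' A) / sphMeasure.real (f '' W) ≤
        D ^ 2 * (sphMeasure.real A / sphMeasure.real W) := by
  have : Nonempty W := by
    by_contra! h
    simp [Set.isEmpty_coe_sort.1 h] at hfW
  set i := ⨅ z : W, sphDeriv f z
  have hi : 0 ≤ i := le_ciInf fun z => sphDeriv_nonneg f z
  have hi_le (z) (hz : z ∈ W) : i ≤ sphDeriv f z :=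
    ciInf_le ⟨0, by rintro _ ⟨w, rfl⟩; exact sphDeriv_nonneg f w⟩ (⟨z, hz⟩ : W)
  have hle_Di (z) (hz : z ∈ W) : sphDeriv f z ≤ D * i := by
    rw [← div_le_iff₀' hD]
    exact le_ciInf fun w => (div_le_iff₀' hD).2 (hdist z hz w.1 w.2)
  have hA₁ := le_sphMeasureReal_image hf hA (hinj.mono hAW) hi fun z hz => hi_le z (hAW hz)
  have hA₂ := sphMeasureReal_image_le hf hA (hinj.mono hAW) fun z hz => hle_Di z (hAW hz)
  have hW₁ := le_sphMeasureReal_image hf hW hinj hi hi_le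
  have hW₂ := sphMeasureReal_image_le hf hW hinj hle_Di
  have hiW : 0 < i ^ 2 * sphMeasure.real W := by
    have : 0 < D ^ 2 * (i ^ 2 * sphMeasure.real W) := by linarith
    exact pos_of_mul_pos_right this (by positivity)
  have hW : 0 < sphMeasure.real W := pos_of_mul_pos_right hiW (by positivity)
  have hi2 : 0 < i ^ 2 := pos_of_mul_pos_left hiW measureReal_nonneg
  rw [mul_div_assoc', mul_div_assoc', div_le_div_iff₀ hW hfW, div_le_div_iff₀ hfW hW]
  constructor
  · refine le_of_mul_le_mul_left ?_ hi2
    nlinarith [measureReal_nonneg (μ := sphMeasure) (s := f '' A)]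
  · refine le_of_mul_le_mul_left ?_ hi2
    nlinarith [measureReal_nonneg (μ := sphMeasure) (s := f '' A)]

end Distortion

/-- The paper's `Ξ̃`, as a function of the distortion bound `D` and of the density `ρ`. -/
def densityBound (D ρ : ℝ) : ℝ := min (D ^ 2 * ρ) (1 - (D ^ 2)⁻¹ * (1 - ρ))

lemma densityBound_mono (D : ℝ) : Monotone (densityBound D) := fun ρ ρ' h =>
  min_le_min (by gcongr) (by gcongr)

lemma densityBound_nonneg {D ρ : ℝ} (hD : 1 ≤ D) (hρ : 0 ≤ ρ) : 0 ≤ densityBound D ρ := by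
  have hD2 : (D ^ 2)⁻¹ ≤ 1 := inv_le_one_of_one_le₀ (one_le_pow₀ hD)
  refine le_min (by positivity) ?_
  rcases le_total ρ 1 with hρ1 | hρ1
  · nlinarith [inv_nonneg.2 (sq_nonneg D)]
  · nlinarith [inv_nonneg.2 (sq_nonneg D)]

lemma le_densityBound {D x y : ℝ} (hD : 0 < D) (h₁ : x ≤ D ^ 2 * y)
    (h₂ : 1 - y ≤ D ^ 2 * (1 - x)) : x ≤ densityBound D y := by
  refine le_min h₁ ?_
  have : (D ^ 2)⁻¹ * (1 - y) ≤ 1 - x := by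
    rw [inv_mul_le_iff₀ (by positivity)]; exact h₂
  linarith

lemma sphMeasureReal_inter_preimage_sdiff_le {f : ℂ → ℂ} (hf : Differentiable ℂ f) {W V K : Set ℂ}
    (hW : MeasurableSet W) (hV : IsOpen V) (hK : MeasurableSet K) (hbij : BijOn f W V)
    {D : ℝ} (hD : 0 < D) (hdist : ∀ z ∈ W, ∀ w ∈ W, sphDeriv f z ≤ D * sphDeriv f w) :
    sphMeasure.real (W ∩ f ⁻¹' (V \ K)) ≤
      densityBound D (sphMeasure.real (V \ K) / sphMeasure.real V) * sphMeasure.real W := by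
  rcases (measureReal_nonneg (μ := sphMeasure) (s := W)).eq_or_lt with hW0 | hWpos
  · rw [← hW0, mul_zero]
    exact (measureReal_mono inter_subset_left).trans hW0.ge
  have hfW : f '' W = V := hbij.image_eq
  have hWne : W.Nonempty := nonempty_iff_ne_empty.2 (by rintro rfl; simp at hWpos)
  have hVpos : 0 < sphMeasure.real V :=
    ENNReal.toReal_pos (hV.measure_pos _ (hfW ▸ hWne.image f)).ne' (measure_ne_top _ _)
  have hVK : MeasurableSet (f ⁻¹' (V \ K)) := hf.continuous.measurable (hV.measurableSet.diff hK)
  obtain ⟨hA, -⟩ := density_le_sq_mul_density_image hf hW hbij.injOn (hfW ▸ hVpos) hD hdist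
    (hW.inter hVK) inter_subset_left
  obtain ⟨-, hB⟩ := density_le_sq_mul_density_image hf hW hbij.injOn (hfW ▸ hVpos) hD hdist
    (hW.diff hVK) sdiff_subset
  rw [image_inter_preimage, hfW, inter_eq_right.2 sdiff_subset] at hA
  rw [image_sdiff_preimage, hfW, sdiff_sdiff_right_self] at hB
  have hV_split := measureReal_inter_add_sdiff (μ := sphMeasure) (s := V) hK
  have hW_split := measureReal_inter_add_sdiff (μ := sphMeasure) (s := W) hVK
  rw [← div_le_iff₀ hWpos]
  refine le_densityBound hD hA ?_
  convert hB using 2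
  · field_simp; linarith
  · field_simp; linarith

lemma connectedComponentIn_eq_univ_of_closure_subset {α : Type*} [TopologicalSpace α]
    [PreconnectedSpace α] [LocallyConnectedSpace α] {U : Set α} (hU : IsOpen U) {x : α}
    (hx : x ∈ U) (h : closure (connectedComponentIn U x) ⊆ U) :
    connectedComponentIn U x = univ := by
  have hclosed : IsClosed (connectedComponentIn U x) :=
    closure_subset_iff_isClosed.1 <| isPreconnected_connectedComponentIn.closure
      |>.subset_connectedComponentIn (subset_closure (mem_connectedComponentIn hx)) h
  exact IsClopen.eq_univ ⟨hclosed, hU.connectedComponentIn⟩ ⟨x, mem_connectedComponentIn hx⟩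

section Ktower

variable {R : ℂ → ℂ}

lemma isClosed_ktower (hR : Continuous R) {S : Set ℂ} (hS : IsOpen S) : IsClosed (Ktower R S) := by
  have : Ktower R S = ⋂ j : ℕ, R^[j] ⁻¹' Sᶜ := by ext z; simp [Ktower]
  rw [this]
  exact isClosed_iInter fun j => hS.isClosed_compl.preimage (hR.iterate j)

lemma ktower_anti {S S' : Set ℂ} (h : S ⊆ S') : Ktower R S' ⊆ Ktower R S :=
  fun _ hz j hj => hz j (h hj)

lemma notMem_preimage_ktower_iff {S : Set ℂ} {z : ℂ} :
    z ∉ R ⁻¹' Ktower R S ↔ ∃ j, R^[j + 1] z ∈ S := by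
  simp [Ktower, Function.iterate_succ_apply]

/-- If the orbit of `z` meets `S` at a time `k < m`, the Markov property makes `R^[k]` send the
whole component `W ∋ z` into `S`; then `closure W` lies in `R⁻ᵏ(Sh)`, which misses `R⁻¹(K(Sh))`,
so `W` is clopen, hence all of `ℂ`, and contains `R^[m] z`. -/
lemma iterate_notMem_ktower (hR : Continuous R) {S Sh : Set ℂ} (hSh : IsOpen Sh)
    (hS : closure S ⊆ Sh)
    (hMarkov : ∀ n : ℕ, 1 ≤ n → ∀ x ∈ R^[n] ⁻¹' Sh,
      closure (connectedComponentIn (R^[n] ⁻¹' Sh) x) ∩ closure S = ∅ ∨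
        closure (connectedComponentIn (R^[n] ⁻¹' Sh) x) ⊆ S)
    {m : ℕ} {z : ℂ} (hmaps : MapsTo (R^[m]) (connectedComponentIn (R ⁻¹' Ktower R Sh)ᶜ z) Sh)
    (hz : z ∉ R ⁻¹' Ktower R S) : R^[m] z ∉ Ktower R S := by
  obtain ⟨j, hj⟩ := notMem_preimage_ktower_iff.1 hz
  set k := j + 1
  by_cases hmk : m ≤ k
  · refine fun h => h (k - m) ?_
    rwa [← Function.iterate_add_apply, Nat.sub_add_cancel hmk]
  set U := (R ⁻¹' Ktower R Sh)ᶜ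
  set W := connectedComponentIn U z
  have hU : IsOpen U := ((isClosed_ktower hR hSh).preimage hR).isOpen_compl
  have hzU : z ∈ U := fun h => hz (ktower_anti (subset_closure.trans hS) h)
  have hiter (w : ℂ) : R^[m] w = R^[m - k] (R^[k] w) := by
    rw [← Function.iterate_add_apply, Nat.sub_add_cancel (by omega)]
  have hzk : R^[k] z ∈ R^[m - k] ⁻¹' Sh := by
    simpa [hiter] using hmaps (mem_connectedComponentIn hzU)
  set C := connectedComponentIn (R^[m - k] ⁻¹' Sh) (R^[k] z)
  have himage : R^[k] '' W ⊆ C :=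
    (isPreconnected_connectedComponentIn.image _ (hR.iterate k).continuousOn)
      |>.subset_connectedComponentIn ⟨z, mem_connectedComponentIn hzU, rfl⟩
        (by rintro _ ⟨w, hw, rfl⟩; simpa [hiter] using hmaps hw)
  have hCS : closure C ⊆ S := (hMarkov (m - k) (by omega) _ hzk).resolve_left
    (Set.Nonempty.ne_empty
      ⟨R^[k] z, subset_closure (mem_connectedComponentIn hzk), subset_closure hj⟩)
  have hWS : MapsTo (R^[k]) W S := fun w hw => hCS (subset_closure (himage ⟨w, hw, rfl⟩))
  have hWuniv : W = univ := by
    refine connectedComponentIn_eq_univ_of_closure_subset hU hzU fun w hw h => ?_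
    have : R^[k] w ∈ closure S :=
      closure_minimal (hWS.mono_right subset_closure) (isClosed_closure.preimage (hR.iterate k)) hw
    exact h j (by rw [← Function.iterate_succ_apply]; exact hS this)
  exact fun h => h k (hWS (hWuniv ▸ mem_univ _))

open scoped ENNReal in
lemma measure_inter_le_mul_of_connectedComponentIn {α : Type*} [TopologicalSpace α]
    [LocallyConnectedSpace α] [TopologicalSpace.SeparableSpace α] [MeasurableSpace α]
    [OpensMeasurableSpace α]
    (μ : Measure α) {U X E : Set α} (hU : IsOpen U) (c : ℝ≥0∞)
    (h : ∀ x ∈ U ∩ X, connectedComponentIn U x ⊆ X ∧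
      μ (connectedComponentIn U x ∩ E) ≤ c * μ (connectedComponentIn U x)) :
    μ (X ∩ U ∩ E) ≤ c * μ (X ∩ U) := by
  set 𝒞 := connectedComponentIn U '' (U ∩ X)
  have hdisj : 𝒞.PairwiseDisjoint id := by
    rintro _ ⟨x, -, rfl⟩ _ ⟨y, -, rfl⟩ hxy
    refine Set.disjoint_left.2 fun w hwx hwy => hxy ?_
    exact (connectedComponentIn_eq hwx).trans (connectedComponentIn_eq hwy).symm
  have hcount : 𝒞.Countable := hdisj.countable_of_isOpen
    (by rintro _ ⟨x, -, rfl⟩; exact hU.connectedComponentIn)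
    (by rintro _ ⟨x, hx, rfl⟩; exact ⟨x, mem_connectedComponentIn hx.1⟩)
  have hcover : X ∩ U ∩ E ⊆ ⋃ C ∈ 𝒞, C ∩ E := fun z ⟨⟨hzX, hzU⟩, hzE⟩ =>
    mem_biUnion ⟨z, ⟨hzU, hzX⟩, rfl⟩ ⟨mem_connectedComponentIn hzU, hzE⟩
  have hunion : ⋃ C ∈ 𝒞, C ⊆ X ∩ U := by
    simp only [iUnion_subset_iff, 𝒞, mem_image]
    rintro _ ⟨x, hx, rfl⟩
    exact subset_inter (h x hx).1 (connectedComponentIn_subset U x)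
  calc μ (X ∩ U ∩ E) ≤ ∑' C : 𝒞, μ (C ∩ E) :=
        (measure_mono hcover).trans (measure_biUnion_le μ hcount _)
    _ ≤ ∑' C : 𝒞, c * μ C := by
        refine ENNReal.tsum_le_tsum fun ⟨C, hC⟩ => ?_
        obtain ⟨x, hx, rfl⟩ := hC
        exact (h x hx).2
    _ = c * μ (⋃ C ∈ 𝒞, C) := by
        rw [ENNReal.tsum_mul_left]
        congr 1
        refine (measure_biUnion (f := id) hcount hdisj ?_).symm
        rintro _ ⟨x, -, rfl⟩
        exact hU.connectedComponentIn.measurableSet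
    _ ≤ c * μ (X ∩ U) := by gcongr

lemma measure_le_ofReal_mul {α : Type*} [MeasurableSpace α] {μ : Measure α} [IsFiniteMeasure μ]
    {s t : Set α} {c : ℝ} (hc : 0 ≤ c) (h : μ.real s ≤ c * μ.real t) :
    μ s ≤ ENNReal.ofReal c * μ t := by
  rw [← ofReal_measureReal (s := s), ← ofReal_measureReal (s := t), ← ENNReal.ofReal_mul hc]
  exact ENNReal.ofReal_le_ofReal h

lemma sphMeasureReal_component_sdiff_le {R : ℂ → ℂ} (hR : Differentiable ℂ R) {S Sh V : Set ℂ}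
    (hSo : IsOpen S) (hSh : IsOpen Sh) (hS : closure S ⊆ Sh)
    (hMarkov : ∀ n : ℕ, 1 ≤ n → ∀ x ∈ R^[n] ⁻¹' Sh,
      closure (connectedComponentIn (R^[n] ⁻¹' Sh) x) ∩ closure S = ∅ ∨
        closure (connectedComponentIn (R^[n] ⁻¹' Sh) x) ⊆ S)
    (hV : IsOpen V) (hVSh : V ⊆ Sh) {x : ℂ} {m : ℕ}
    (hbij : BijOn (R^[m]) (connectedComponentIn (R ⁻¹' Ktower R Sh)ᶜ x) V) {D : ℝ} (hD : 0 < D)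
    (hdist : ∀ z ∈ connectedComponentIn (R ⁻¹' Ktower R Sh)ᶜ x,
      ∀ w ∈ connectedComponentIn (R ⁻¹' Ktower R Sh)ᶜ x,
        sphDeriv (R^[m]) z ≤ D * sphDeriv (R^[m]) w) :
    sphMeasure.real (connectedComponentIn (R ⁻¹' Ktower R Sh)ᶜ x \ R ⁻¹' Ktower R S) ≤
      densityBound D (sphMeasure.real (V \ Ktower R S) / sphMeasure.real V) *
        sphMeasure.real (connectedComponentIn (R ⁻¹' Ktower R Sh)ᶜ x) := by
  have hU : IsOpen (R ⁻¹' Ktower R Sh)ᶜ :=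
    ((isClosed_ktower hR.continuous hSh).preimage hR.continuous).isOpen_compl
  refine (measureReal_mono ?_).trans
    (sphMeasureReal_inter_preimage_sdiff_le (hR.iterate m) hU.connectedComponentIn.measurableSet
      hV (isClosed_ktower hR.continuous hSo).measurableSet hbij hD hdist)
  rintro z ⟨hzW, hz⟩
  refine ⟨hzW, hbij.mapsTo hzW, iterate_notMem_ktower hR.continuous hSh hS hMarkov ?_ hz⟩
  rw [← connectedComponentIn_eq hzW]
  exact hbij.mapsTo.mono_right hVSh

theorem stmt11_general (R : ℂ → ℂ) (hR : Differentiable ℂ R)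
    (CJ : Finset ℂ) (hne : CJ.Nonempty)
    (Vh V : ℂ → Set ℂ)
    (hopen : ∀ c ∈ CJ, IsOpen (V c) ∧ IsOpen (Vh c))
    (hnest : ∀ c ∈ CJ, closure (V c) ⊆ Vh c)
    -- the Markov property of the nice couple: every pull-back of `V̂` has closure
    -- disjoint from, or contained in, `V` (and similarly for `V̂`).
    (hMarkov : ∀ n : ℕ, 1 ≤ n → ∀ x ∈ R^[n] ⁻¹' (⋃ c ∈ CJ, Vh c),
        (closure (connectedComponentIn (R^[n] ⁻¹' (⋃ c ∈ CJ, Vh c)) x) ∩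
            closure (⋃ c ∈ CJ, V c) = ∅ ∨
          closure (connectedComponentIn (R^[n] ⁻¹' (⋃ c ∈ CJ, Vh c)) x) ⊆
            ⋃ c ∈ CJ, V c) ∧
        (closure (connectedComponentIn (R^[n] ⁻¹' (⋃ c ∈ CJ, Vh c)) x) ∩
            closure (⋃ c ∈ CJ, Vh c) = ∅ ∨
          closure (connectedComponentIn (R^[n] ⁻¹' (⋃ c ∈ CJ, Vh c)) x) ⊆
            ⋃ c ∈ CJ, Vh c))
    (D : ℝ) (hD : 1 < D)
    (X : Set ℂ)
    -- every component `Ŵ` of `ℂ̂ \ R⁻¹(K(V̂))` meeting `X` lies in `X`, and some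
    -- iterate `R^{m_Ŵ}` maps it univalently onto a component `V̂^c` with
    -- distortion bounded by `D`.
    (hcomp : ∀ x ∈ (R ⁻¹' Ktower R (⋃ c ∈ CJ, Vh c))ᶜ,
        (connectedComponentIn (R ⁻¹' Ktower R (⋃ c ∈ CJ, Vh c))ᶜ x ∩ X).Nonempty →
        connectedComponentIn (R ⁻¹' Ktower R (⋃ c ∈ CJ, Vh c))ᶜ x ⊆ X ∧
        ∃ m : ℕ, ∃ c ∈ CJ,
          Set.BijOn (R^[m])
            (connectedComponentIn (R ⁻¹' Ktower R (⋃ c ∈ CJ, Vh c))ᶜ x) (Vh c) ∧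
          (∀ z ∈ connectedComponentIn (R ⁻¹' Ktower R (⋃ c ∈ CJ, Vh c))ᶜ x,
            ∀ w ∈ connectedComponentIn (R ⁻¹' Ktower R (⋃ c ∈ CJ, Vh c))ᶜ x,
              sphDeriv (R^[m]) z ≤ D * sphDeriv (R^[m]) w)) :
    sphArea (X \ R ⁻¹' Ktower R (⋃ c ∈ CJ, V c)) / sphArea X ≤
      (sphArea (X \ R ⁻¹' Ktower R (⋃ c ∈ CJ, Vh c)) / sphArea X) *
        min (D ^ 2 * CJ.sup' hne (fun c =>
              sphArea (Vh c \ Ktower R (⋃ c' ∈ CJ, V c')) / sphArea (Vh c)))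
          (1 - (D ^ 2)⁻¹ * (1 - CJ.sup' hne (fun c =>
              sphArea (Vh c \ Ktower R (⋃ c' ∈ CJ, V c')) / sphArea (Vh c)))) := by
  simp only [sphArea_eq_measureReal]
  set S := ⋃ c ∈ CJ, V c
  set Sh := ⋃ c ∈ CJ, Vh c
  set ρ := fun c => sphMeasure.real (Vh c \ Ktower R S) / sphMeasure.real (Vh c)
  set M := CJ.sup' hne ρ
  have hSo : IsOpen S := isOpen_biUnion fun c hc => (hopen c hc).1
  have hSh : IsOpen Sh := isOpen_biUnion fun c hc => (hopen c hc).2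
  have hS : closure S ⊆ Sh := by rw [Finset.closure_biUnion]; exact iUnion₂_mono hnest
  have hΞ : 0 ≤ densityBound D M := densityBound_nonneg hD.le <|
    hne.elim fun c hc =>
      (div_nonneg measureReal_nonneg measureReal_nonneg).trans (Finset.le_sup' ρ hc)
  have hkey := measure_inter_le_mul_of_connectedComponentIn sphMeasure
    ((isClosed_ktower hR.continuous hSh).preimage hR.continuous).isOpen_compl
    (E := (R ⁻¹' Ktower R S)ᶜ) (ENNReal.ofReal (densityBound D M)) fun x hx => by
      obtain ⟨hWX, m, c, hc, hbij, hdist⟩ := hcomp x hx.1 ⟨x, mem_connectedComponentIn hx.1, hx.2⟩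
      refine ⟨hWX, measure_le_ofReal_mul hΞ <| (sphMeasureReal_component_sdiff_le hR hSo hSh hS
        (fun n hn y hy => (hMarkov n hn y hy).1) (hopen c hc).2 (subset_biUnion_of_mem hc) hbij
        (by linarith) hdist).trans ?_⟩
      gcongr
      exact densityBound_mono D (Finset.le_sup' ρ hc)
  rw [inter_assoc, inter_eq_right.2 (compl_subset_compl.2 (preimage_mono
    (ktower_anti (subset_closure.trans hS))))] at hkey
  rw [div_mul_eq_mul_div]
  refine div_le_div_of_nonneg_right ?_ measureReal_nonneg
  have h := ENNReal.toReal_mono (by finiteness) hkey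
  rwa [ENNReal.toReal_mul, ENNReal.toReal_ofReal hΞ, mul_comm] at h

/-- Density-transfer lemma for a nice couple `(V̂, V)`: if every component `Ŵ` of
`ℂ̂ \ R⁻¹(K(V̂))` meeting `X` is contained in `X` and `R^{m_Ŵ}` is univalent on `Ŵ`
with (spherical-derivative) distortion at most `D`, then
`ξ(X, V) ≤ ξ(X, V̂) · Ξ̃(V̂, V)`. -/
theorem stmt11 (R : ℂ → ℂ) (hR : Differentiable ℂ R)
    (CJ : Finset ℂ) (hne : CJ.Nonempty)
    (hCJcrit : ∀ c ∈ CJ, deriv R c = 0)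
    (Vh V : ℂ → Set ℂ)
    (hopen : ∀ c ∈ CJ, IsOpen (V c) ∧ IsOpen (Vh c))
    (hmem : ∀ c ∈ CJ, c ∈ V c)
    (hnest : ∀ c ∈ CJ, closure (V c) ⊆ Vh c)
    (hdisj : ∀ c ∈ CJ, ∀ c' ∈ CJ, c ≠ c' → closure (Vh c) ∩ closure (Vh c') = ∅)
    -- the Markov property of the nice couple: every pull-back of `V̂` has closure
    -- disjoint from, or contained in, `V` (and similarly for `V̂`).
    (hMarkov : ∀ n : ℕ, 1 ≤ n → ∀ x ∈ R^[n] ⁻¹' (⋃ c ∈ CJ, Vh c),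
        (closure (connectedComponentIn (R^[n] ⁻¹' (⋃ c ∈ CJ, Vh c)) x) ∩
            closure (⋃ c ∈ CJ, V c) = ∅ ∨
          closure (connectedComponentIn (R^[n] ⁻¹' (⋃ c ∈ CJ, Vh c)) x) ⊆
            ⋃ c ∈ CJ, V c) ∧
        (closure (connectedComponentIn (R^[n] ⁻¹' (⋃ c ∈ CJ, Vh c)) x) ∩
            closure (⋃ c ∈ CJ, Vh c) = ∅ ∨
          closure (connectedComponentIn (R^[n] ⁻¹' (⋃ c ∈ CJ, Vh c)) x) ⊆
            ⋃ c ∈ CJ, Vh c))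
    (D : ℝ) (hD : 1 < D)
    (X : Set ℂ) (hXmeas : MeasurableSet X) (hXpos : 0 < sphArea X)
    -- every component `Ŵ` of `ℂ̂ \ R⁻¹(K(V̂))` meeting `X` lies in `X`, and some
    -- iterate `R^{m_Ŵ}` maps it univalently onto a component `V̂^c` with
    -- distortion bounded by `D`.
    (hcomp : ∀ x ∈ (R ⁻¹' Ktower R (⋃ c ∈ CJ, Vh c))ᶜ,
        (connectedComponentIn (R ⁻¹' Ktower R (⋃ c ∈ CJ, Vh c))ᶜ x ∩ X).Nonempty →
        connectedComponentIn (R ⁻¹' Ktower R (⋃ c ∈ CJ, Vh c))ᶜ x ⊆ X ∧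
        ∃ m : ℕ, ∃ c ∈ CJ,
          Set.BijOn (R^[m])
            (connectedComponentIn (R ⁻¹' Ktower R (⋃ c ∈ CJ, Vh c))ᶜ x) (Vh c) ∧
          (∀ z ∈ connectedComponentIn (R ⁻¹' Ktower R (⋃ c ∈ CJ, Vh c))ᶜ x,
            ∀ w ∈ connectedComponentIn (R ⁻¹' Ktower R (⋃ c ∈ CJ, Vh c))ᶜ x,
              sphDeriv (R^[m]) z ≤ D * sphDeriv (R^[m]) w)) :
    sphArea (X \ R ⁻¹' Ktower R (⋃ c ∈ CJ, V c)) / sphArea X ≤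
      (sphArea (X \ R ⁻¹' Ktower R (⋃ c ∈ CJ, Vh c)) / sphArea X) *
        min (D ^ 2 * CJ.sup' hne (fun c =>
              sphArea (Vh c \ Ktower R (⋃ c' ∈ CJ, V c')) / sphArea (Vh c)))
          (1 - (D ^ 2)⁻¹ * (1 - CJ.sup' hne (fun c =>
              sphArea (Vh c \ Ktower R (⋃ c' ∈ CJ, V c')) / sphArea (Vh c)))) :=
  stmt11_general R hR CJ hne Vh V hopen hnest hMarkov D hD X hcomp
end Ktower
end
end
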